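/- Let m be a positive integer whose odd part is squarefree, and let h and t be positive integers such that t is even whenever h is even. Then S(h,t,m) = S(h,t,1) · E_1(m_2) · ∏_{p|m, p∤2t} (−1/(p(p−1)/gcd(p,h) − 1)), the product being over odd primes p dividing m but not dividing t. -/

import Mathlib

open Polynomial

/-- The Wagstaff sum `S(h,t,m) = ∑_{n ≥ 1, m ∣ nt} μ(n)·gcd(nt,h)/(nt·φ(nt))`. -/
noncomputable def wagstaffS (h t m : ℕ) : ℝ :=
  ∑' n : ℕ, if 0 < n ∧ m ∣ n * t then
      (ArithmeticFunction.moebius n : ℝ) * (Nat.gcd (n * t) h : ℝ) /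
        (↑(n * t) * ↑(Nat.totient (n * t)))
    else 0

/-- The Artin constant `A = ∏_p (1 - 1/(p(p-1)))`. -/
noncomputable def artinConst : ℝ :=
  ∏' p : Nat.Primes, (1 - 1 / ((p : ℝ) * ((p : ℝ) - 1)))

/-- `E_1(m_2)`, depending also on the 2-parts `h_2` and `t_2`. -/
noncomputable def E1 (h2 t2 m2 : ℕ) : ℝ :=
  if m2 ∣ t2 then 1
  else if m2 = 2 * t2 ∧ Nat.lcm 2 h2 ∣ t2 then -1/3
  else if m2 = 2 * t2 ∧ ¬ Nat.lcm 2 h2 ∣ t2 then -1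
  else 0

/-- `E_2(m_2)`, depending also on the 2-part `t_2`. -/
noncomputable def E2 (t2 m2 : ℕ) : ℝ :=
  if m2 ∣ t2 then 1
  else if m2 = 2 * t2 ∧ m2 ≠ 2 then -1/3
  else if m2 = 2 * t2 ∧ m2 = 2 then -1
  else 0

/-- `[F_p : ℚ]`, where `F_p = ℚ(ζ_p, g^{1/p})` is the splitting field of `X^p - g` over `ℚ`. -/
noncomputable def FpDeg (g : ℚ) (p : ℕ) : ℕ :=
  Module.finrank ℚ ((X ^ p - C g : ℚ[X]).SplittingField)

/-- `A(g,t) = (gcd(t,h)/t²)·∏_{p∣t, h_p∣t_p}(1+1/p)·∏_{p∤t}(1-1/[F_p:ℚ])`. -/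
noncomputable def Agt (g : ℚ) (h t : ℕ) : ℝ :=
  ((Nat.gcd t h : ℝ) / (t : ℝ) ^ 2) *
    (∏ p ∈ t.primeFactors, if ordProj[p] h ∣ ordProj[p] t then 1 + 1 / (p : ℝ) else 1) *
    ∏' p : Nat.Primes, (if (p : ℕ) ∣ t then 1 else 1 - 1 / (FpDeg g (p : ℕ) : ℝ))

/-- `Π_1 = ∏_{p ∣ d, p ∤ 2t} (-1/([F_p:ℚ]-1))`, where `d` is (the absolute value of) `d(g₀)`. -/
noncomputable def Pi1 (g : ℚ) (t d : ℕ) : ℝ :=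
  ∏ p ∈ d.primeFactors, (if ¬ p ∣ 2 * t then -1 / ((FpDeg g p : ℝ) - 1) else 1)

/-- Discriminant of `ℚ(√d)` for a squarefree integer `d`: `d` if `d ≡ 1 (mod 4)`, else `4d`. -/
def sqDisc (d : ℤ) : ℤ := if d % 4 = 1 then d else 4 * d

/-- `g₀` is not an exact power of a rational number. -/
def NotExactPower (g0 : ℚ) : Prop := ∀ (r : ℚ) (k : ℕ), 2 ≤ k → g0 ≠ r ^ k

/-! ### Auxiliary lemmas -/

section Aux

open ArithmeticFunction Nat

/-- Odd totient lower bound. -/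
lemma wag_odd_le_totient_sq : ∀ n : ℕ, Odd n → n ≤ n.totient ^ 2 := by
  intro n
  induction n using Nat.recOnPosPrimePosCoprime with
  | prime_pow p k hp hk =>
    intro hodd
    have hpp : p.Prime := hp
    have hp2 : p ≠ 2 := by
      rintro rfl
      exact (Nat.not_odd_iff_even.mpr (Nat.even_pow.mpr ⟨even_two, hk.ne'⟩)) hodd
    have hp3 : 3 ≤ p := by have := hpp.two_le; omega
    rw [Nat.totient_prime_pow hpp hk]
    calc p ^ k ≤ p ^ (2 * k - 2) * (p - 1) ^ 2 := by
          rcases Nat.eq_or_lt_of_le hk with h1 | h2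
          · rw [← h1]
            obtain ⟨q, rfl⟩ : ∃ q, p = q + 3 := ⟨p - 3, by omega⟩
            have he : q + 3 - 1 = q + 2 := by omega
            simp only [pow_one, mul_one, Nat.mul_sub, he]
            have : 2 * 1 - 2 = 0 := by norm_num
            rw [this, pow_zero, one_mul]
            nlinarith
          · have hk2 : k ≤ 2 * k - 2 := by omega
            have hpos : 0 < (p - 1) ^ 2 := by
              have : 0 < p - 1 := by omega
              positivity
            calc p ^ k ≤ p ^ (2*k-2) := Nat.pow_le_pow_right hpp.pos hk2
              _ ≤ p ^ (2*k-2) * (p-1)^2 := Nat.le_mul_of_pos_right _ hpos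
      _ = (p ^ (k - 1) * (p - 1)) ^ 2 := by
          rw [mul_pow, ← pow_mul, show (k-1)*2 = 2*k-2 by omega]
  | zero => intro h; simp at h
  | one => intro _; simp
  | coprime a b ha hb hab iha ihb =>
    intro hodd
    have hoab : Odd a ∧ Odd b := by
      rw [Nat.odd_mul] at hodd; exact hodd
    rw [Nat.totient_mul hab, mul_pow]
    exact Nat.mul_le_mul (iha hoab.1) (ihb hoab.2)

/-- General totient lower bound: `n ≤ 2·φ(n)²`. -/
lemma wag_le_two_mul_totient_sq (n : ℕ) : n ≤ 2 * n.totient ^ 2 := by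
  rcases Nat.eq_zero_or_pos n with rfl | hn
  · simp
  rcases Nat.even_or_odd n with he | ho
  · set v := n.factorization 2 with hv
    have hvpos : 0 < v := by
      rw [hv]
      exact Nat.Prime.factorization_pos_of_dvd Nat.prime_two hn.ne' he.two_dvd
    have hdecomp : 2 ^ v * (n / 2 ^ v) = n := Nat.ordProj_mul_ordCompl_eq_self n 2
    set u := n / 2 ^ v with hu
    have hu_odd : ¬ 2 ∣ u := Nat.not_dvd_ordCompl Nat.prime_two hn.ne'
    have hcop : Nat.Coprime (2 ^ v) u :=
      Nat.Coprime.pow_left _ (Nat.coprime_ordCompl Nat.prime_two hn.ne')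
    have hphi : n.totient = 2 ^ (v - 1) * u.totient := by
      rw [← hdecomp, Nat.totient_mul hcop, Nat.totient_prime_pow Nat.prime_two hvpos]
      ring_nf
    have hub : u ≤ u.totient ^ 2 := wag_odd_le_totient_sq u (Nat.odd_iff.mpr (by omega))
    calc n = 2 ^ v * u := hdecomp.symm
      _ ≤ 2 ^ v * u.totient ^ 2 := Nat.mul_le_mul_left _ hub
      _ ≤ 2 * (2 ^ (v-1) * u.totient) ^ 2 := by
          rw [mul_pow, ← mul_assoc, ← pow_mul]
          have : 2 ^ v ≤ 2 * 2 ^ ((v-1)*2) := by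
            rw [← pow_succ']
            exact Nat.pow_le_pow_right (by norm_num) (by omega)
          exact Nat.mul_le_mul_right _ this
      _ = 2 * n.totient ^ 2 := by rw [hphi]
  · exact (wag_odd_le_totient_sq n ho).trans (by omega)

/-- The summand of the Wagstaff sum (without the divisibility condition). -/
noncomputable def wagF (h t : ℕ) (n : ℕ) : ℝ :=
  if 0 < n then (ArithmeticFunction.moebius n : ℝ) * (Nat.gcd (n * t) h : ℝ) /
      (↑(n * t) * ↑(Nat.totient (n * t))) else 0

lemma summable_wagF (h t : ℕ) (hh : 0 < h) (ht : 0 < t) : Summable (wagF h t) := by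
  apply Summable.of_abs
  refine Summable.of_nonneg_of_le (fun n => abs_nonneg _) (fun n => ?_)
    (Summable.mul_left (Real.sqrt 2 * h)
      (Real.summable_one_div_nat_rpow.mpr (by norm_num : (1:ℝ) < 3/2)))
  rcases Nat.eq_zero_or_pos n with rfl | hn
  · simp only [wagF, lt_irrefl, if_neg, abs_zero, if_false]
    positivity
  have hnt : 0 < n * t := Nat.mul_pos hn ht
  have hφ : 0 < Nat.totient (n * t) := Nat.totient_pos.mpr hnt
  have hφn : 0 < Nat.totient n := Nat.totient_pos.mpr hn
  have hD : (0:ℝ) < (n * t : ℕ) * (Nat.totient (n * t) : ℕ) := by positivity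
  have hμ : |(ArithmeticFunction.moebius n : ℝ)| ≤ 1 := by
    by_cases hsf : Squarefree n
    · rw [← Int.cast_abs, ArithmeticFunction.abs_moebius, if_pos hsf]; norm_num
    · simp [ArithmeticFunction.moebius_eq_zero_of_not_squarefree hsf]
  have hg : (Nat.gcd (n * t) h : ℝ) ≤ (h : ℝ) := by
    exact_mod_cast Nat.le_of_dvd hh (Nat.gcd_dvd_right _ _)
  have hgen : (0:ℝ) ≤ (Nat.gcd (n * t) h : ℝ) := by positivity
  have hn32pos : (0:ℝ) < (n : ℝ) ^ (3/2 : ℝ) := by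
    apply Real.rpow_pos_of_pos; exact_mod_cast hn
  have h32 : (n:ℝ) ^ (3/2:ℝ) = Real.sqrt ((n:ℝ)^3) := by
    rw [Real.sqrt_eq_rpow, ← Real.rpow_natCast (n:ℝ) 3, ← Real.rpow_mul (by positivity)]
    norm_num
  have hkey : (n:ℝ) ^ (3/2:ℝ) ≤ Real.sqrt 2 * ((n : ℝ) * (Nat.totient n : ℝ)) := by
    have hnat : (n:ℝ) ≤ 2 * (Nat.totient n : ℝ)^2 := by
      exact_mod_cast wag_le_two_mul_totient_sq n
    have hsq : ((n:ℝ))^3 ≤ (Real.sqrt 2 * ((n : ℝ) * (Nat.totient n : ℝ)))^2 := by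
      have h2 : (Real.sqrt 2)^2 = 2 := Real.sq_sqrt (by norm_num)
      rw [mul_pow, h2]
      nlinarith [(Nat.cast_pos (α := ℝ)).mpr hn, (Nat.cast_pos (α := ℝ)).mpr hφn]
    rw [h32]
    calc Real.sqrt ((n:ℝ)^3) ≤ Real.sqrt ((Real.sqrt 2 * ((n : ℝ) * (Nat.totient n : ℝ)))^2) :=
          Real.sqrt_le_sqrt hsq
      _ = _ := by rw [Real.sqrt_sq (by positivity)]
  have hmono : (n : ℝ) * (Nat.totient n : ℝ) ≤ ((n * t : ℕ) : ℝ) * (Nat.totient (n * t) : ℕ) := by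
    have h1 : n ≤ n * t := Nat.le_mul_of_pos_right _ ht
    have h2 : Nat.totient n ≤ Nat.totient (n * t) :=
      Nat.le_of_dvd hφ (Nat.totient_dvd_of_dvd ⟨t, rfl⟩)
    exact_mod_cast Nat.mul_le_mul h1 h2
  rw [wagF, if_pos hn, abs_div, abs_mul, abs_of_pos hD]
  calc |(ArithmeticFunction.moebius n : ℝ)| * |(Nat.gcd (n * t) h : ℝ)| /
        ((n * t : ℕ) * (Nat.totient (n * t) : ℕ))
      ≤ 1 * (h:ℝ) / ((n * t : ℕ) * (Nat.totient (n * t) : ℕ)) := by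
        gcongr
        rw [abs_of_nonneg hgen]; exact hg
    _ = (h:ℝ) / ((n * t : ℕ) * (Nat.totient (n * t) : ℕ)) := by rw [one_mul]
    _ ≤ Real.sqrt 2 * h * (1 / (n : ℝ) ^ (3/2 : ℝ)) := by
        rw [mul_one_div, div_le_div_iff₀ hD hn32pos]
        have hh0 : (0:ℝ) ≤ (h:ℝ) := by positivity
        nlinarith [hkey.trans (by nlinarith [Real.sqrt_nonneg 2] :
          Real.sqrt 2 * ((n : ℝ) * (Nat.totient n : ℝ)) ≤
          Real.sqrt 2 * (((n * t : ℕ) : ℝ) * (Nat.totient (n * t) : ℕ)))]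

lemma wag_summable_ite (f : ℕ → ℝ) (hf : Summable f) (c : ℕ → Prop) [DecidablePred c] :
    Summable (fun n => if c n then f n else 0) := by
  have := hf.indicator {n | c n}
  apply this.congr
  intro n
  simp [Set.indicator_apply, Set.mem_setOf_eq]

lemma wag_key_split (g : ℕ → ℝ) (hg : Summable g) (p : ℕ) (hp : 0 < p) (c : ℝ)
    (H : ∀ n, g (p * n) = c * (if p ∣ n then 0 else g n)) (hc : 1 + c ≠ 0) :
    (∑' n, if p ∣ n then g n else 0) = c / (1 + c) * ∑' n, g n := by
  classical
  have hinj : Function.Injective (fun n : ℕ => p * n) :=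
    fun a b hab => Nat.eq_of_mul_eq_mul_left hp hab
  have hA : Summable (fun n => if p ∣ n then g n else 0) := wag_summable_ite g hg _
  have hB : Summable (fun n => if p ∣ n then 0 else g n) := by
    have := wag_summable_ite g hg (fun n => ¬ p ∣ n)
    apply this.congr
    intro n; by_cases h : p ∣ n <;> simp [h]
  have h1 : (∑' n, if p ∣ n then g n else 0) = ∑' n, g (p * n) := by
    rw [← hinj.tsum_eq (f := fun n => if p ∣ n then g n else 0) ?_]
    · exact tsum_congr fun n => by simp [Dvd.intro n rfl]
    · intro x hx
      simp only [Function.mem_support, ne_eq, ite_eq_right_iff, not_forall] at hx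
      obtain ⟨hdvd, _⟩ := hx
      obtain ⟨k, rfl⟩ := hdvd
      exact ⟨k, rfl⟩
  have h3 : (∑' n, g (p * n)) = c * ∑' n, (if p ∣ n then 0 else g n) := by
    rw [← tsum_mul_left]
    exact tsum_congr H
  have h2 : (∑' n, g n)
      = (∑' n, if p ∣ n then g n else 0) + ∑' n, (if p ∣ n then 0 else g n) := by
    rw [← hA.tsum_add hB]
    exact tsum_congr fun n => by by_cases h : p ∣ n <;> simp [h]
  have hAB : (∑' n, if p ∣ n then g n else 0) = c * ∑' n, (if p ∣ n then 0 else g n) := by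
    rw [h1, h3]
  rw [hAB, h2, hAB]
  field_simp
  ring

lemma wag_gcd_factorization_apply {a h : ℕ} (ha : a ≠ 0) (hh : h ≠ 0) (q : ℕ) :
    (Nat.gcd a h).factorization q = min (a.factorization q) (h.factorization q) := by
  rw [Nat.factorization_gcd ha hh, Finsupp.inf_apply]

lemma wag_gcd_ne_zero {a h : ℕ} (hh : h ≠ 0) : Nat.gcd a h ≠ 0 := by
  intro h0
  exact hh (Nat.eq_zero_of_gcd_eq_zero_right h0)

lemma wag_gcd_prime_mul_of_le {p a h : ℕ} (hp : p.Prime) (ha : a ≠ 0) (hh : h ≠ 0)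
    (hle : h.factorization p ≤ a.factorization p) :
    Nat.gcd (p * a) h = Nat.gcd a h := by
  have hpa : p * a ≠ 0 := Nat.mul_ne_zero hp.ne_zero ha
  apply Nat.eq_of_factorization_eq (wag_gcd_ne_zero hh) (wag_gcd_ne_zero hh)
  intro q
  rw [wag_gcd_factorization_apply hpa hh, wag_gcd_factorization_apply ha hh,
    Nat.factorization_mul hp.ne_zero ha, Finsupp.add_apply, hp.factorization,
    Finsupp.single_apply]
  by_cases hq : p = q
  · subst hq; omega
  · simp [hq]

lemma wag_gcd_prime_mul_of_lt {p a h : ℕ} (hp : p.Prime) (ha : a ≠ 0) (hh : h ≠ 0)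
    (hlt : a.factorization p < h.factorization p) :
    Nat.gcd (p * a) h = p * Nat.gcd a h := by
  have hpa : p * a ≠ 0 := Nat.mul_ne_zero hp.ne_zero ha
  apply Nat.eq_of_factorization_eq (wag_gcd_ne_zero hh)
    (Nat.mul_ne_zero hp.ne_zero (wag_gcd_ne_zero hh))
  intro q
  rw [wag_gcd_factorization_apply hpa hh,
    Nat.factorization_mul hp.ne_zero ha, Finsupp.add_apply, hp.factorization,
    Nat.factorization_mul hp.ne_zero (wag_gcd_ne_zero hh (a := a)),
    Finsupp.add_apply, hp.factorization, wag_gcd_factorization_apply ha hh,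
    Finsupp.single_apply]
  by_cases hq : p = q
  · subst hq; simp only [eq_self_iff_true, if_true]; omega
  · simp [hq]

lemma wag_moebius_prime_mul {p n : ℕ} (hp : p.Prime) (hpn : ¬ p ∣ n) :
    ArithmeticFunction.moebius (p * n) = - ArithmeticFunction.moebius n := by
  rw [ArithmeticFunction.isMultiplicative_moebius.map_mul_of_coprime
    ((Nat.Prime.coprime_iff_not_dvd hp).mpr hpn),
    ArithmeticFunction.moebius_apply_prime hp]
  ring

lemma wagF_zero_of_dvd (h t : ℕ) {p n : ℕ} (hp : p.Prime) (hpn : p ∣ n) :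
    wagF h t (p * n) = 0 := by
  rcases Nat.eq_zero_or_pos n with rfl | hn
  · simp [wagF]
  have hns : ¬ Squarefree (p * n) := by
    intro hsf
    obtain ⟨k, rfl⟩ := hpn
    exact hp.not_isUnit (hsf p (by ring_nf; exact Dvd.intro k (by ring)))
  rw [wagF, if_pos (Nat.mul_pos hp.pos hn),
    ArithmeticFunction.moebius_eq_zero_of_not_squarefree hns]
  simp

lemma wagF_ratio (h t : ℕ) {n p : ℕ} (r s : ℕ) (hh : 0 < h) (ht : 0 < t) (hp : p.Prime)
    (hpn : ¬ p ∣ n)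
    (hgcd : Nat.gcd (p * (n * t)) h = r * Nat.gcd (n * t) h)
    (hphi : Nat.totient (p * (n * t)) = s * Nat.totient (n * t))
    (hs : 0 < s) :
    wagF h t (p * n) = (-(r:ℝ) / ((p:ℝ) * (s:ℝ))) * wagF h t n := by
  have hn : 0 < n := Nat.pos_of_ne_zero (by rintro rfl; exact hpn (dvd_zero p))
  have ha : 0 < n * t := Nat.mul_pos hn ht
  have hφ : 0 < Nat.totient (n * t) := Nat.totient_pos.mpr ha
  have hμ := wag_moebius_prime_mul hp hpn
  rw [wagF, wagF, if_pos hn, if_pos (Nat.mul_pos hp.pos hn),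
    show p * n * t = p * (n * t) by ring, hμ, hgcd, hphi]
  have hp0 : (0:ℝ) < (p:ℝ) := by exact_mod_cast hp.pos
  have ha0 : (0:ℝ) < ((n*t : ℕ):ℝ) := by exact_mod_cast ha
  have hφ0 : (0:ℝ) < ((Nat.totient (n*t) : ℕ):ℝ) := by exact_mod_cast hφ
  have hs0 : (0:ℝ) < ((s : ℕ):ℝ) := by exact_mod_cast hs
  push_cast
  field_simp

lemma wagstaffS_eq (h t m : ℕ) :
    wagstaffS h t m = ∑' n, if m ∣ n * t then wagF h t n else 0 := by
  unfold wagstaffS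
  apply tsum_congr
  intro n
  unfold wagF
  by_cases h1 : 0 < n <;> by_cases h2 : m ∣ n * t <;> simp [h1, h2]

lemma wagstaffS_one (h t : ℕ) : wagstaffS h t 1 = ∑' n, wagF h t n := by
  rw [wagstaffS_eq]
  exact tsum_congr fun n => if_pos (one_dvd _)

end Aux

section Main

open ArithmeticFunction Nat

lemma wag_aux (h t : ℕ) (hh : 0 < h) (ht : 0 < t) (hpar : 2 ∣ h → 2 ∣ t) :
    ∀ m, 0 < m → Squarefree (ordCompl[2] m) →
    wagstaffS h t m = wagstaffS h t 1 * E1 (ordProj[2] h) (ordProj[2] t) (ordProj[2] m) *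
      ∏ p ∈ m.primeFactors,
        (if ¬ p ∣ 2 * t then
            -1 / ((p : ℝ) * ((p : ℝ) - 1) / (Nat.gcd p h : ℝ) - 1)
         else 1) := by
  intro m
  induction m using Nat.strong_induction_on with
  | _ m IH =>
  intro hm hsq
  by_cases hex : ∃ p ∈ m.primeFactors, ¬ p ∣ 2 * t
  · -- inductive step: remove an odd prime p ∣ m with p ∤ t
    obtain ⟨p, hpm, hp2t⟩ := hex
    have hp : p.Prime := Nat.prime_of_mem_primeFactors hpm
    have hp2 : p ≠ 2 := by rintro rfl; exact hp2t ⟨t, rfl⟩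
    have hpt : ¬ p ∣ t := fun hd => hp2t (Dvd.dvd.mul_left hd 2)
    obtain ⟨m', rfl⟩ := Nat.dvd_of_mem_primeFactors hpm
    have hm' : 0 < m' := Nat.pos_of_ne_zero (by rintro rfl; simp at hm)
    have hpfac2 : p.factorization 2 = 0 := by
      rw [hp.factorization, Finsupp.single_apply, if_neg hp2]
    have hfac2 : (p * m').factorization 2 = m'.factorization 2 := by
      rw [Nat.factorization_mul hp.ne_zero hm'.ne', Finsupp.add_apply, hpfac2, zero_add]
    have hordC : ordCompl[2] (p * m') = p * ordCompl[2] m' := by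
      rw [hfac2]
      exact Nat.mul_div_assoc p (Nat.ordProj_dvd m' 2)
    rw [hordC] at hsq
    have hcop2 : Nat.Coprime p 2 := (Nat.Prime.coprime_iff_not_dvd hp).mpr
      (fun hdd => hp2 ((Nat.prime_dvd_prime_iff_eq hp Nat.prime_two).mp hdd))
    have hpm' : ¬ p ∣ m' := by
      intro hd
      have h1 : p ∣ ordCompl[2] m' := by
        have h2 : Nat.Coprime p (2 ^ m'.factorization 2) := hcop2.pow_right _
        refine (Nat.Coprime.dvd_mul_left h2).mp ?_
        rw [Nat.ordProj_mul_ordCompl_eq_self m' 2]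
        exact hd
      exact hp.not_isUnit (hsq p (mul_dvd_mul_left p h1))
    have hsq' : Squarefree (ordCompl[2] m') := hsq.of_mul_right
    have hord2 : ordProj[2] (p * m') = ordProj[2] m' := by rw [hfac2]
    have hcond : ∀ n : ℕ, (p * m' ∣ n * t ↔ p ∣ n ∧ m' ∣ n * t) := by
      intro n
      constructor
      · intro hd
        have hpn : p ∣ n := by
          have h1 : p ∣ n * t := dvd_trans (dvd_mul_right p m') hd
          rcases (Nat.Prime.dvd_mul hp).mp h1 with h | h
          exacts [h, absurd h hpt]
        exact ⟨hpn, dvd_trans (dvd_mul_left m' p) hd⟩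
      · rintro ⟨h1, h2⟩
        exact Nat.Coprime.mul_dvd_of_dvd_of_dvd
          ((Nat.Prime.coprime_iff_not_dvd hp).mpr hpm') (Dvd.dvd.mul_right h1 t) h2
    have hgle : Nat.gcd p h ≤ p := Nat.le_of_dvd hp.pos (Nat.gcd_dvd_left p h)
    have hgpos : 0 < Nat.gcd p h := Nat.pos_of_ne_zero (wag_gcd_ne_zero hh.ne')
    have hp3 : 3 ≤ p := by have := hp.two_le; omega
    have hp3' : (3:ℝ) ≤ (p:ℝ) := by exact_mod_cast hp3
    have hgle' : (Nat.gcd p h : ℝ) ≤ (p:ℝ) := by exact_mod_cast hgle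
    have hgpos' : (1:ℝ) ≤ (Nat.gcd p h : ℝ) := by exact_mod_cast hgpos
    set c : ℝ := -(Nat.gcd p h : ℝ) / ((p:ℝ) * ((p:ℝ) - 1)) with hc
    have hP : (0:ℝ) < (p:ℝ) * ((p:ℝ)-1) := by nlinarith
    have hglt : (Nat.gcd p h : ℝ) < (p:ℝ) * ((p:ℝ)-1) := by nlinarith
    have hc1pos : 0 < 1 + c := by
      rw [hc, neg_div]
      have := (div_lt_one hP).mpr hglt
      linarith
    have hc1 : 1 + c ≠ 0 := hc1pos.ne'
    have hsum : Summable (fun n => if m' ∣ n * t then wagF h t n else 0) :=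
      wag_summable_ite _ (summable_wagF h t hh ht) _
    have hH : ∀ n, (if m' ∣ (p * n) * t then wagF h t (p * n) else 0)
        = c * (if p ∣ n then 0 else (if m' ∣ n * t then wagF h t n else 0)) := by
      intro n
      by_cases hpn : p ∣ n
      · rw [if_pos hpn, wagF_zero_of_dvd h t hp hpn]
        simp
      · rw [if_neg hpn]
        have hmeq : (m' ∣ (p*n)*t) ↔ (m' ∣ n*t) := by
          rw [show (p*n)*t = p*(n*t) by ring]
          exact Nat.Coprime.dvd_mul_left
            (Nat.Coprime.symm ((hp.coprime_iff_not_dvd).mpr hpm'))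
        have hn : 0 < n := Nat.pos_of_ne_zero (by rintro rfl; exact hpn (dvd_zero p))
        have ha : n * t ≠ 0 := (Nat.mul_pos hn ht).ne'
        have hpa : ¬ p ∣ n * t := fun hd => by
          rcases (hp.dvd_mul).mp hd with h1 | h1
          exacts [hpn h1, hpt h1]
        have hphi : Nat.totient (p * (n*t)) = (p-1) * Nat.totient (n*t) := by
          rw [Nat.totient_mul ((hp.coprime_iff_not_dvd).mpr hpa), Nat.totient_prime hp]
        have hfa : (n*t).factorization p = 0 := Nat.factorization_eq_zero_of_not_dvd hpa
        have hratio : wagF h t (p * n) = c * wagF h t n := by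
          rw [hc]
          by_cases hph : p ∣ h
          · have hgcd : Nat.gcd (p*(n*t)) h = Nat.gcd p h * Nat.gcd (n*t) h := by
              rw [wag_gcd_prime_mul_of_lt hp ha hh.ne'
                (by rw [hfa]; exact hp.factorization_pos_of_dvd hh.ne' hph),
                Nat.gcd_eq_left hph]
            rw [wagF_ratio h t (Nat.gcd p h) (p-1) hh ht hp hpn hgcd hphi (by omega)]
            congr 1
            rw [Nat.cast_sub hp.one_le]
            norm_num
          · have hgcd : Nat.gcd (p*(n*t)) h = 1 * Nat.gcd (n*t) h := by
              rw [one_mul]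
              exact wag_gcd_prime_mul_of_le hp ha hh.ne'
                (by rw [Nat.factorization_eq_zero_of_not_dvd hph]; omega)
            have hg1 : Nat.gcd p h = 1 := (hp.coprime_iff_not_dvd).mpr hph
            rw [wagF_ratio h t 1 (p-1) hh ht hp hpn hgcd hphi (by omega), hg1]
            congr 1
            rw [Nat.cast_sub hp.one_le]
            norm_num
        by_cases hm2 : m' ∣ n*t
        · rw [if_pos (hmeq.mpr hm2), if_pos hm2, hratio]
        · rw [if_neg (fun hd => hm2 (hmeq.mp hd)), if_neg hm2, mul_zero]
    have hkey := wag_key_split _ hsum p hp.pos c hH hc1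
    have hS : wagstaffS h t (p * m') = c / (1 + c) * wagstaffS h t m' := by
      rw [wagstaffS_eq h t (p*m'), wagstaffS_eq h t m', ← hkey]
      apply tsum_congr
      intro n
      by_cases h1 : p ∣ n <;> by_cases h2 : m' ∣ n * t <;> simp [hcond n, h1, h2]
    have hlt : m' < p * m' := by
      have := (Nat.lt_mul_iff_one_lt_left hm').mpr hp.one_lt
      exact this
    have hIH := IH m' hlt hm' hsq'
    have hpf : (p * m').primeFactors = insert p m'.primeFactors := by
      rw [Nat.primeFactors_mul hp.ne_zero hm'.ne', hp.primeFactors, ← Finset.insert_eq]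
    have hpnotin : p ∉ m'.primeFactors :=
      fun hmem => hpm' (Nat.dvd_of_mem_primeFactors hmem)
    rw [hS, hIH, hord2, hpf, Finset.prod_insert hpnotin, if_pos hp2t]
    have hfac : c / (1 + c) = -1 / ((p:ℝ) * ((p:ℝ)-1) / (Nat.gcd p h : ℝ) - 1) := by
      have hg0 : (Nat.gcd p h : ℝ) ≠ 0 := by exact_mod_cast hgpos.ne'
      have hB : (p:ℝ) * ((p:ℝ)-1) / (Nat.gcd p h : ℝ) - 1 ≠ 0 := by
        have : 1 < (p:ℝ) * ((p:ℝ)-1) / (Nat.gcd p h : ℝ) := by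
          rw [lt_div_iff₀ (by nlinarith : (0:ℝ) < (Nat.gcd p h : ℝ))]
          nlinarith
        linarith
      rw [div_eq_div_iff hc1 hB, hc]
      have hp1 : (p:ℝ) - 1 ≠ 0 := by linarith
      field_simp
      ring
    rw [hfac]
    ring
  · -- base case
    push_neg at hex
    have hprod1 : (∏ p ∈ m.primeFactors,
        (if ¬ p ∣ 2 * t then
            -1 / ((p : ℝ) * ((p : ℝ) - 1) / (Nat.gcd p h : ℝ) - 1)
         else 1)) = 1 :=
      Finset.prod_eq_one (fun p hp => by rw [if_neg (not_not_intro (hex p hp))])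
    have hcompl0 : ordCompl[2] m ≠ 0 := (Nat.ordCompl_pos 2 hm.ne').ne'
    have hd't : ordCompl[2] m ∣ t := by
      rw [← Nat.factorization_le_iff_dvd hcompl0 ht.ne', Finsupp.le_def]
      intro q
      by_cases hq0 : (ordCompl[2] m).factorization q = 0
      · rw [hq0]; exact Nat.zero_le _
      · have hqp : q.Prime := Nat.prime_of_mem_primeFactors (by
          rw [← Nat.support_factorization]; exact Finsupp.mem_support_iff.mpr hq0)
        have hqd : q ∣ ordCompl[2] m := Nat.dvd_of_factorization_pos hq0
        have hq2 : q ≠ 2 := by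
          rintro rfl; exact Nat.not_dvd_ordCompl Nat.prime_two hm.ne' hqd
        have hqm : q ∣ m := hqd.trans (Nat.ordCompl_dvd m 2)
        have hq2t : q ∣ 2 * t := hex q (Nat.mem_primeFactors.mpr ⟨hqp, hqm, hm.ne'⟩)
        have hqt : q ∣ t := by
          rcases (Nat.Prime.dvd_mul hqp).mp hq2t with h1 | h1
          · exact absurd ((Nat.prime_dvd_prime_iff_eq hqp Nat.prime_two).mp h1) hq2
          · exact h1
        have h1 : (ordCompl[2] m).factorization q ≤ 1 := hsq.natFactorization_le_one q
        have h2 : 0 < t.factorization q := hqp.factorization_pos_of_dvd ht.ne' hqt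
        omega
    have hcond1 : ∀ n : ℕ, (m ∣ n * t ↔ 2 ^ m.factorization 2 ∣ n * t) := by
      intro n
      constructor
      · exact fun hd => dvd_trans (Nat.ordProj_dvd m 2) hd
      · intro hd
        have hcop : Nat.Coprime (2 ^ m.factorization 2) (ordCompl[2] m) :=
          Nat.Coprime.pow_left _ (Nat.coprime_ordCompl Nat.prime_two hm.ne')
        have := Nat.Coprime.mul_dvd_of_dvd_of_dvd hcop hd (hd't.trans (dvd_mul_left t n))
        rwa [Nat.ordProj_mul_ordCompl_eq_self m 2] at this
    have hS0 : wagstaffS h t m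
        = ∑' n, if 2 ^ m.factorization 2 ∣ n * t then wagF h t n else 0 := by
      rw [wagstaffS_eq]
      exact tsum_congr fun n => by rw [if_congr (hcond1 n) rfl rfl]
    rcases le_or_gt (m.factorization 2) (t.factorization 2) with hab | hab
    · -- `a ≤ b` : the condition is vacuous and `E1 = 1`
      have hdvd : (2:ℕ) ^ m.factorization 2 ∣ t :=
        dvd_trans (pow_dvd_pow 2 hab) (Nat.ordProj_dvd t 2)
      have hSS : wagstaffS h t m = wagstaffS h t 1 := by
        rw [hS0, wagstaffS_one]
        exact tsum_congr fun n => if_pos (hdvd.trans (dvd_mul_left t n))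
      have hE : E1 (ordProj[2] h) (ordProj[2] t) (ordProj[2] m) = 1 := by
        rw [E1, if_pos (pow_dvd_pow 2 hab)]
      rw [hSS, hE, hprod1]; ring
    rcases Nat.lt_or_ge (t.factorization 2 + 1) (m.factorization 2) with hab2 | hab2
    · -- `a ≥ b + 2` : the sum vanishes and `E1 = 0`
      have hSS : wagstaffS h t m = 0 := by
        rw [hS0]
        have hz : ∀ n : ℕ, (if 2 ^ m.factorization 2 ∣ n * t then wagF h t n else 0) = 0 := by
          intro n
          by_cases hd : 2 ^ m.factorization 2 ∣ n * t
          · rw [if_pos hd]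
            rcases Nat.eq_zero_or_pos n with rfl | hn
            · simp [wagF]
            by_cases hsf : Squarefree n
            · exfalso
              have h1 : m.factorization 2 ≤ (n*t).factorization 2 :=
                (Nat.Prime.pow_dvd_iff_le_factorization Nat.prime_two
                  (Nat.mul_pos hn ht).ne').mp hd
              rw [Nat.factorization_mul hn.ne' ht.ne', Finsupp.add_apply] at h1
              have h2 : n.factorization 2 ≤ 1 := hsf.natFactorization_le_one 2
              omega
            · rw [wagF, if_pos hn,
                ArithmeticFunction.moebius_eq_zero_of_not_squarefree hsf]
              simp
          · rw [if_neg hd]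
        rw [tsum_congr hz, tsum_zero]
      have hE : E1 (ordProj[2] h) (ordProj[2] t) (ordProj[2] m) = 0 := by
        have hne1 : ¬ (2:ℕ) ^ m.factorization 2 ∣ 2 ^ t.factorization 2 := by
          rw [pow_dvd_pow_iff_le_right (by norm_num : (1:ℕ) < 2)]
          omega
        have hne2 : (2:ℕ) ^ m.factorization 2 ≠ 2 * 2 ^ t.factorization 2 := by
          rw [← _root_.pow_succ']
          intro hcontra
          have := Nat.pow_right_injective (le_refl 2) hcontra
          omega
        rw [E1, if_neg hne1, if_neg (by tauto), if_neg (by tauto)]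
      rw [hSS, hE]; ring
    · -- `a = b + 1`
      have hab3 : m.factorization 2 = t.factorization 2 + 1 := by omega
      have hcond2 : ∀ n : ℕ, ((2:ℕ) ^ m.factorization 2 ∣ n * t ↔ 2 ∣ n) := by
        intro n
        constructor
        · intro hd
          by_contra hn2
          have hcop : Nat.Coprime (2 ^ m.factorization 2) n :=
            Nat.Coprime.pow_left _ ((Nat.prime_two.coprime_iff_not_dvd).mpr hn2)
          have h2t : (2:ℕ) ^ m.factorization 2 ∣ t := (Nat.Coprime.dvd_mul_left hcop).mp hd
          have : m.factorization 2 ≤ t.factorization 2 :=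
            (Nat.Prime.pow_dvd_iff_le_factorization Nat.prime_two ht.ne').mp h2t
          omega
        · rintro ⟨k, rfl⟩
          have h2b : (2:ℕ) ^ t.factorization 2 ∣ t := Nat.ordProj_dvd t 2
          have hstep : (2:ℕ) ^ m.factorization 2 ∣ 2 * t := by
            rw [hab3, _root_.pow_succ']
            exact mul_dvd_mul_left 2 h2b
          exact hstep.trans ⟨k, by ring⟩
      obtain ⟨c, hcval, hc1, hE⟩ :
          ∃ c : ℝ, (∀ n : ℕ, ¬ 2 ∣ n → wagF h t (2 * n) = c * wagF h t n) ∧ (1 + c ≠ 0) ∧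
            E1 (ordProj[2] h) (ordProj[2] t) (ordProj[2] m) = c / (1 + c) := by
        by_cases hb0 : t.factorization 2 = 0
        · -- t odd, hence h odd
          have ht2 : ¬ 2 ∣ t := by
            intro hd
            have := Nat.Prime.factorization_pos_of_dvd Nat.prime_two ht.ne' hd
            omega
          have hh2 : ¬ 2 ∣ h := fun hd => ht2 (hpar hd)
          have he0 : h.factorization 2 = 0 := Nat.factorization_eq_zero_of_not_dvd hh2
          refine ⟨-1/2, ?_, by norm_num, ?_⟩
          · intro n h2n
            have hn : 0 < n := Nat.pos_of_ne_zero (by rintro rfl; exact h2n (dvd_zero 2))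
            have ha0 : n * t ≠ 0 := (Nat.mul_pos hn ht).ne'
            have h2nt : ¬ 2 ∣ n * t := by
              intro hd
              rcases (Nat.Prime.dvd_mul Nat.prime_two).mp hd with h1 | h1
              exacts [h2n h1, ht2 h1]
            have hgcd : Nat.gcd (2*(n*t)) h = 1 * Nat.gcd (n*t) h := by
              rw [one_mul]
              exact wag_gcd_prime_mul_of_le Nat.prime_two ha0 hh.ne' (by rw [he0]; omega)
            have hphi : Nat.totient (2*(n*t)) = 1 * Nat.totient (n*t) := by
              rw [one_mul, Nat.totient_mul ((Nat.prime_two.coprime_iff_not_dvd).mpr h2nt),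
                Nat.totient_two, one_mul]
            rw [wagF_ratio h t 1 1 hh ht Nat.prime_two h2n hgcd hphi one_pos]
            norm_num
          · rw [E1, hab3, he0, hb0]
            norm_num [Nat.lcm]
        · have hb1 : 1 ≤ t.factorization 2 := by omega
          have h2t : (2:ℕ) ∣ t := by
            have hstep : (2:ℕ)^1 ∣ 2 ^ t.factorization 2 := pow_dvd_pow 2 hb1
            simpa using hstep.trans (Nat.ordProj_dvd t 2)
          have hnd : ¬ (2:ℕ) ^ m.factorization 2 ∣ 2 ^ t.factorization 2 := by
            rw [pow_dvd_pow_iff_le_right (by norm_num : (1:ℕ) < 2)]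
            omega
          have heq2 : (2:ℕ) ^ m.factorization 2 = 2 * 2 ^ t.factorization 2 := by
            rw [hab3, _root_.pow_succ']
          by_cases heb : h.factorization 2 ≤ t.factorization 2
          · -- gcd ratio 1, totient ratio 2 : `c = -1/4`
            refine ⟨-1/4, ?_, by norm_num, ?_⟩
            · intro n h2n
              have hn : 0 < n := Nat.pos_of_ne_zero (by rintro rfl; exact h2n (dvd_zero 2))
              have ha0 : n * t ≠ 0 := (Nat.mul_pos hn ht).ne'
              have hnfac : n.factorization 2 = 0 := Nat.factorization_eq_zero_of_not_dvd h2n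
              have hgcd : Nat.gcd (2*(n*t)) h = 1 * Nat.gcd (n*t) h := by
                rw [one_mul]
                refine wag_gcd_prime_mul_of_le Nat.prime_two ha0 hh.ne' ?_
                rw [Nat.factorization_mul hn.ne' ht.ne', Finsupp.add_apply, hnfac, zero_add]
                exact heb
              have hphi : Nat.totient (2*(n*t)) = 2 * Nat.totient (n*t) :=
                Nat.totient_mul_of_prime_of_dvd Nat.prime_two (h2t.trans (dvd_mul_left t n))
              rw [wagF_ratio h t 1 2 hh ht Nat.prime_two h2n hgcd hphi two_pos]
              norm_num
            · have hlcm : Nat.lcm 2 (2 ^ h.factorization 2) ∣ 2 ^ t.factorization 2 := by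
                refine Nat.lcm_dvd ?_ (pow_dvd_pow 2 heb)
                exact dvd_trans (by norm_num) (pow_dvd_pow 2 hb1)
              rw [E1, if_neg hnd, if_pos ⟨heq2, hlcm⟩]
              norm_num
          · -- gcd ratio 2, totient ratio 2 : `c = -1/2`
            refine ⟨-1/2, ?_, by norm_num, ?_⟩
            · intro n h2n
              have hn : 0 < n := Nat.pos_of_ne_zero (by rintro rfl; exact h2n (dvd_zero 2))
              have ha0 : n * t ≠ 0 := (Nat.mul_pos hn ht).ne'
              have hnfac : n.factorization 2 = 0 := Nat.factorization_eq_zero_of_not_dvd h2n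
              have hgcd : Nat.gcd (2*(n*t)) h = 2 * Nat.gcd (n*t) h := by
                refine wag_gcd_prime_mul_of_lt Nat.prime_two ha0 hh.ne' ?_
                rw [Nat.factorization_mul hn.ne' ht.ne', Finsupp.add_apply, hnfac, zero_add]
                omega
              have hphi : Nat.totient (2*(n*t)) = 2 * Nat.totient (n*t) :=
                Nat.totient_mul_of_prime_of_dvd Nat.prime_two (h2t.trans (dvd_mul_left t n))
              rw [wagF_ratio h t 2 2 hh ht Nat.prime_two h2n hgcd hphi two_pos]
              norm_num
            · have hlcm : ¬ Nat.lcm 2 (2 ^ h.factorization 2) ∣ 2 ^ t.factorization 2 := by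
                intro hd
                have hpd : (2:ℕ) ^ h.factorization 2 ∣ 2 ^ t.factorization 2 :=
                  (Nat.dvd_lcm_right 2 _).trans hd
                rw [pow_dvd_pow_iff_le_right (by norm_num : (1:ℕ) < 2)] at hpd
                omega
              rw [E1, if_neg hnd, if_neg (by tauto), if_pos ⟨heq2, hlcm⟩]
              norm_num
      have hH : ∀ n, wagF h t (2 * n) = c * (if 2 ∣ n then 0 else wagF h t n) := by
        intro n
        by_cases h2n : 2 ∣ n
        · rw [if_pos h2n, wagF_zero_of_dvd h t Nat.prime_two h2n, mul_zero]
        · rw [if_neg h2n, hcval n h2n]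
      have hkey := wag_key_split (wagF h t) (summable_wagF h t hh ht) 2 two_pos c hH hc1
      have hSS : wagstaffS h t m = c / (1+c) * wagstaffS h t 1 := by
        rw [hS0, wagstaffS_one, ← hkey]
        exact tsum_congr fun n => by rw [if_congr (hcond2 n) rfl rfl]
      rw [hSS, hE, hprod1]
      ring

end Main

/-- For `m` with squarefree odd part, and `t` even whenever `h` is even,
`S(h,t,m) = S(h,t,1)·E₁(m₂)·∏_{p ∣ m, p ∤ 2t} (-1/(p(p-1)/gcd(p,h) - 1))`. -/
theorem wagstaff_euler_form (h t m : ℕ) (hh : 0 < h) (ht : 0 < t) (hm : 0 < m)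
    (hsq : Squarefree (ordCompl[2] m)) (hpar : 2 ∣ h → 2 ∣ t) :
    wagstaffS h t m = wagstaffS h t 1 * E1 (ordProj[2] h) (ordProj[2] t) (ordProj[2] m) *
      ∏ p ∈ m.primeFactors,
        (if ¬ p ∣ 2 * t then
            -1 / ((p : ℝ) * ((p : ℝ) - 1) / (Nat.gcd p h : ℝ) - 1)
         else 1) :=
  wag_aux h t hh ht hpar m hm hsq
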